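/- Let f : Γ → [0,∞) be integrable with respect to the Lebesgue–Poisson measure λ on finite configurations over [0,∞), and define f_t(γ) = ∫_{Γ_t} f(γ_t ∪ ξ) λ(dξ), where γ_t = {x+t : x ∈ γ} and Γ_t = {ξ ∈ Γ : ξ ⊂ [0,t)}. Then ∫_Γ f_t(γ)λ(dγ) = ∫_Γ f(γ)λ(dγ); i.e., the map f ↦ f_t preserves the L¹(λ)-norm on nonnegative functions. -/

import Mathlib

open MeasureTheory

noncomputable section

open Classical in
/-- The map sending a tuple (x₁,…,xₙ) ∈ ℝⁿ to the finite configuration {x₁,…,xₙ}. -/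
def confMap (n : ℕ) (x : Fin n → ℝ) : Finset ℝ := Finset.univ.image x

/-- The σ-algebra on finite configurations. -/
instance : MeasurableSpace (Finset ℝ) :=
  ⨅ n : ℕ, MeasurableSpace.map (confMap n) inferInstance

/-- The Lebesgue–Poisson measure λ on finite configurations over [0,∞). -/
def lebesguePoisson : Measure (Finset ℝ) :=
  Measure.sum (fun n : ℕ =>
    ((n.factorial : ENNReal))⁻¹ •
      Measure.map (confMap n) (volume.restrict {x : Fin n → ℝ | ∀ i, 0 ≤ x i}))

open Classical in
/-- The evolution of the soluble drift model:
    f_t(γ) = ∫_{Γ_t} f(γ_t ∪ ξ) λ(dξ), where γ_t = {x + t : x ∈ γ} and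
    Γ_t = {ξ : ξ ⊂ [0,t)}. -/
def solEvolution (f : Finset ℝ → ℝ) (t : ℝ) (γ : Finset ℝ) : ℝ :=
  ∫ ξ in {ξ : Finset ℝ | (ξ : Set ℝ) ⊆ Set.Ico 0 t},
    f ((γ.image (fun x => x + t)) ∪ ξ) ∂lebesguePoisson



/-! ### Auxiliary material for the proof -/

open ENNReal

namespace SolubleAux

lemma measurable_confMap (n : ℕ) : Measurable (confMap n) :=
  fun _s hs => MeasurableSpace.measurableSet_iInf.1 hs n

lemma measurable_from_conf {β : Type*} [MeasurableSpace β] {g : Finset ℝ → β}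
    (h : ∀ n, Measurable fun x : Fin n → ℝ => g (confMap n x)) : Measurable g :=
  fun _B hB => MeasurableSpace.measurableSet_iInf.2 fun n => h n hB

lemma measurableSet_conf {S : Set (Finset ℝ)}
    (h : ∀ n, MeasurableSet (confMap n ⁻¹' S)) : MeasurableSet S :=
  MeasurableSpace.measurableSet_iInf.2 h


section Pack

variable {m n k : ℕ} (ε : (Fin m ⊕ Fin n) ≃ Fin k)

/-- Gluing a pair of tuples into a single tuple, along an identification of index sets. -/
def packEquiv : ((Fin m → ℝ) × (Fin n → ℝ)) ≃ᵐ (Fin k → ℝ) :=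
  (MeasurableEquiv.sumPiEquivProdPi (fun _ => ℝ)).symm.trans
    (MeasurableEquiv.piCongrLeft (fun _ => ℝ) ε)

lemma packEquiv_apply_inl (p : (Fin m → ℝ) × (Fin n → ℝ)) (i : Fin m) :
    packEquiv ε p (ε (Sum.inl i)) = p.1 i := by
  simpa [packEquiv, MeasurableEquiv.trans, MeasurableEquiv.piCongrLeft,
    MeasurableEquiv.sumPiEquivProdPi] using
    Equiv.piCongrLeft_sum_inl (fun _ : Fin k => ℝ) ε p.1 p.2 i

lemma packEquiv_apply_inr (p : (Fin m → ℝ) × (Fin n → ℝ)) (j : Fin n) :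
    packEquiv ε p (ε (Sum.inr j)) = p.2 j := by
  simpa [packEquiv, MeasurableEquiv.trans, MeasurableEquiv.piCongrLeft,
    MeasurableEquiv.sumPiEquivProdPi] using
    Equiv.piCongrLeft_sum_inr (fun _ : Fin k => ℝ) ε p.1 p.2 j

lemma measurePreserving_packEquiv :
    MeasurePreserving (packEquiv ε) volume volume :=
  (volume_measurePreserving_piCongrLeft (fun _ => ℝ) ε).comp
    (volume_measurePreserving_sumPiEquivProdPi_symm (fun _ => ℝ))

open Classical in
lemma confMap_packEquiv (p : (Fin m → ℝ) × (Fin n → ℝ)) :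
    confMap k (packEquiv ε p) = confMap m p.1 ∪ confMap n p.2 := by
  ext a
  simp only [confMap, Finset.mem_image, Finset.mem_union, Finset.mem_univ, true_and]
  constructor
  · rintro ⟨i, rfl⟩
    obtain ⟨s, rfl⟩ := ε.surjective i
    cases s with
    | inl j => exact Or.inl ⟨j, (packEquiv_apply_inl ε p j).symm⟩
    | inr j => exact Or.inr ⟨j, (packEquiv_apply_inr ε p j).symm⟩
  · rintro (⟨j, rfl⟩ | ⟨j, rfl⟩)
    · exact ⟨ε (Sum.inl j), packEquiv_apply_inl ε p j⟩
    · exact ⟨ε (Sum.inr j), packEquiv_apply_inr ε p j⟩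

end Pack

open Classical in
lemma measurable_conf_union (m n : ℕ) :
    Measurable (fun p : (Fin m → ℝ) × (Fin n → ℝ) => confMap m p.1 ∪ confMap n p.2) := by
  have h : (fun p : (Fin m → ℝ) × (Fin n → ℝ) => confMap m p.1 ∪ confMap n p.2)
      = fun p => confMap (m + n) (packEquiv finSumFinEquiv p) := by
    funext p; rw [confMap_packEquiv]
  rw [h]
  exact (measurable_confMap _).comp (packEquiv finSumFinEquiv).measurable

open Classical in
lemma exists_conf_eq (c : Finset ℝ) : confMap c.card (fun j => (c.equivFin.symm j : ℝ)) = c := by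
  ext a
  simp only [confMap, Finset.mem_image, Finset.mem_univ, true_and]
  constructor
  · rintro ⟨j, rfl⟩; exact (c.equivFin.symm j).2
  · intro ha; exact ⟨c.equivFin ⟨a, ha⟩, by simp⟩

open Classical in
lemma measurable_const_union (c : Finset ℝ) (m : ℕ) :
    Measurable (fun x : Fin m → ℝ => c ∪ confMap m x) := by
  have h : (fun x : Fin m → ℝ => c ∪ confMap m x)
      = fun x => confMap c.card (fun j => (c.equivFin.symm j : ℝ)) ∪ confMap m x := by
    simp [exists_conf_eq]
  rw [h]
  exact (measurable_conf_union _ _).comp (measurable_const.prodMk measurable_id)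


def Ort (n : ℕ) : Set (Fin n → ℝ) := {x | ∀ i, 0 ≤ x i}
def Tset (t : ℝ) (m : ℕ) : Set (Fin m → ℝ) := {y | ∀ i, y i ∈ Set.Ico 0 t}
def Uset (t : ℝ) (n : ℕ) : Set (Fin n → ℝ) := {x | ∀ i, t ≤ x i}

lemma measurableSet_Ort (n : ℕ) : MeasurableSet (Ort n) := by
  have : Ort n = ⋂ i, (fun x : Fin n → ℝ => x i) ⁻¹' Set.Ici 0 := by
    ext x; simp [Ort]
  rw [this]
  exact MeasurableSet.iInter fun i => (measurable_pi_apply i) measurableSet_Ici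

lemma measurableSet_Tset (t : ℝ) (m : ℕ) : MeasurableSet (Tset t m) := by
  have : Tset t m = ⋂ i, (fun x : Fin m → ℝ => x i) ⁻¹' Set.Ico 0 t := by
    ext x; simp [Tset]
  rw [this]
  exact MeasurableSet.iInter fun i => (measurable_pi_apply i) measurableSet_Ico

lemma measurableSet_Uset (t : ℝ) (n : ℕ) : MeasurableSet (Uset t n) := by
  have : Uset t n = ⋂ i, (fun x : Fin n → ℝ => x i) ⁻¹' Set.Ici t := by
    ext x; simp [Uset]
  rw [this]
  exact MeasurableSet.iInter fun i => (measurable_pi_apply i) measurableSet_Ici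

lemma lintegral_LP {F : Finset ℝ → ℝ≥0∞} (hF : Measurable F) :
    ∫⁻ γ, F γ ∂lebesguePoisson
      = ∑' n, ((n.factorial : ℝ≥0∞))⁻¹ * ∫⁻ x in Ort n, F (confMap n x) := by
  rw [lebesguePoisson, lintegral_sum_measure]
  refine tsum_congr fun n => ?_
  rw [lintegral_smul_measure, lintegral_map hF (measurable_confMap n)]
  rfl

lemma lintegral_LP_restrict {F : Finset ℝ → ℝ≥0∞} (hF : Measurable F)
    {S : Set (Finset ℝ)} (hS : MeasurableSet S) :
    ∫⁻ γ in S, F γ ∂lebesguePoisson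
      = ∑' n, ((n.factorial : ℝ≥0∞))⁻¹ *
          ∫⁻ x in confMap n ⁻¹' S ∩ Ort n, F (confMap n x) := by
  rw [lebesguePoisson, Measure.restrict_sum _ hS, lintegral_sum_measure]
  refine tsum_congr fun n => ?_
  rw [Measure.restrict_smul, lintegral_smul_measure,
    Measure.restrict_map (measurable_confMap n) hS,
    lintegral_map hF (measurable_confMap n),
    Measure.restrict_restrict (measurable_confMap n hS)]
  rfl


open Classical


/-- The inner double integral `D m n`. -/
def Dint (g : Finset ℝ → ℝ≥0∞) (t : ℝ) (m n : ℕ) : ℝ≥0∞ :=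
  ∫⁻ y in Tset t m, ∫⁻ x in Uset t n, g (confMap m y ∪ confMap n x) ∂volume ∂volume

variable {t : ℝ} {k : ℕ}

def Wset (t : ℝ) {k : ℕ} (S : Finset (Fin k)) : Set (Fin k → ℝ) :=
  {z | ∀ i, (i ∈ S → z i ∈ Set.Ico 0 t) ∧ (i ∉ S → t ≤ z i)}

lemma measurableSet_Wset (S : Finset (Fin k)) : MeasurableSet (Wset t S) := by
  have : Wset t S = ⋂ i, ((fun z : Fin k → ℝ => z i) ⁻¹'
      (if i ∈ S then Set.Ico 0 t else Set.Ici t)) := by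
    ext z
    simp only [Wset, Set.mem_setOf_eq, Set.mem_iInter, Set.mem_preimage]
    refine forall_congr' fun i => ?_
    by_cases h : i ∈ S <;> simp [h]
  rw [this]
  exact MeasurableSet.iInter fun i => (measurable_pi_apply i) (by
    by_cases h : i ∈ S <;> simp [h, measurableSet_Ico, measurableSet_Ici])

lemma Ort_eq_iUnion_Wset (ht : 0 < t) : Ort k = ⋃ S : Finset (Fin k), Wset t S := by
  ext z
  simp only [Ort, Set.mem_setOf_eq, Set.mem_iUnion]
  constructor
  · intro hz
    refine ⟨Finset.univ.filter (fun i => z i < t), fun i => ⟨fun hi => ?_, fun hi => ?_⟩⟩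
    · exact ⟨hz i, (Finset.mem_filter.1 hi).2⟩
    · simpa using fun h : z i < t => hi (Finset.mem_filter.2 ⟨Finset.mem_univ i, h⟩)
  · rintro ⟨S, hS⟩ i
    by_cases hi : i ∈ S
    · exact ((hS i).1 hi).1
    · exact le_trans ht.le ((hS i).2 hi)

lemma pairwise_disjoint_Wset :
    Pairwise (Function.onFun Disjoint (Wset t (k := k))) := by
  intro S S' hne
  rw [Function.onFun, Set.disjoint_left]
  rintro z hz hz'
  obtain ⟨i, hi⟩ : ∃ i, ¬(i ∈ S ↔ i ∈ S') := by
    by_contra h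
    push_neg at h
    exact hne (Finset.ext_iff.2 fun i => h i)
  rcases Classical.em (i ∈ S) with h1 | h1
  · have h2 : i ∉ S' := fun h2 => hi ⟨fun _ => h2, fun _ => h1⟩
    exact absurd ((hz i).1 h1).2 (not_lt.2 ((hz' i).2 h2))
  · have h2 : i ∈ S' := by
      rcases Classical.em (i ∈ S') with h | h
      · exact h
      · exact absurd ⟨fun hh => absurd hh h1, fun hh => absurd hh h⟩ hi
    exact absurd ((hz' i).1 h2).2 (not_lt.2 ((hz i).2 h1))

/-- The index identification attached to a subset `S` of `Fin k`. -/
def epsS (S : Finset (Fin k)) : (Fin S.card ⊕ Fin (k - S.card)) ≃ Fin k :=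
  ((S.equivFin.symm).sumCongr
    ((finCongr (by simp [Finset.card_compl])).trans
      ((Sᶜ.equivFin.symm).trans
        (Equiv.subtypeEquivRight (fun i => Finset.mem_compl))))).trans
    (Equiv.sumCompl (· ∈ S))

lemma epsS_inl_mem (S : Finset (Fin k)) (j : Fin S.card) : epsS S (Sum.inl j) ∈ S := by
  simp only [epsS, Equiv.trans_apply, Equiv.sumCongr_apply, Sum.map_inl]
  rw [Equiv.sumCompl_apply_inl]
  exact (S.equivFin.symm j).2

lemma epsS_inr_not_mem (S : Finset (Fin k)) (j : Fin (k - S.card)) :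
    epsS S (Sum.inr j) ∉ S := by
  simp only [epsS, Equiv.trans_apply, Equiv.sumCongr_apply, Sum.map_inr]
  rw [Equiv.sumCompl_apply_inr]
  exact (((finCongr (by simp [Finset.card_compl] : k - S.card = Sᶜ.card)).trans
    ((Sᶜ.equivFin.symm).trans (Equiv.subtypeEquivRight (fun i => Finset.mem_compl)))) j).2

lemma preimage_packEquiv_Wset (S : Finset (Fin k)) :
    packEquiv (epsS S) ⁻¹' Wset t S = Tset t S.card ×ˢ Uset t (k - S.card) := by
  ext p
  simp only [Set.mem_preimage, Wset, Set.mem_setOf_eq, Set.mem_prod, Tset, Uset]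
  constructor
  · intro h
    refine ⟨fun j => ?_, fun j => ?_⟩
    · have := (h (epsS S (Sum.inl j))).1 (epsS_inl_mem S j)
      rwa [packEquiv_apply_inl] at this
    · have := (h (epsS S (Sum.inr j))).2 (epsS_inr_not_mem S j)
      rwa [packEquiv_apply_inr] at this
  · rintro ⟨h1, h2⟩ i
    obtain ⟨s, rfl⟩ := (epsS S).surjective i
    cases s with
    | inl j =>
      refine ⟨fun _ => ?_, fun hn => absurd (epsS_inl_mem S j) hn⟩
      rw [packEquiv_apply_inl]; exact h1 j
    | inr j =>
      refine ⟨fun hm => absurd hm (epsS_inr_not_mem S j), fun _ => ?_⟩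
      rw [packEquiv_apply_inr]; exact h2 j

lemma lintegral_Wset (g : Finset ℝ → ℝ≥0∞) (hg : Measurable g) (S : Finset (Fin k)) :
    ∫⁻ z in Wset t S, g (confMap k z) ∂volume = Dint g t S.card (k - S.card) := by
  rw [← (measurePreserving_packEquiv (epsS S)).setLIntegral_comp_preimage_emb
    (packEquiv (epsS S)).measurableEmbedding (fun z => g (confMap k z)) (Wset t S)]
  have h1 : ∀ p : (Fin S.card → ℝ) × (Fin (k - S.card) → ℝ),
      g (confMap k (packEquiv (epsS S) p)) = g (confMap S.card p.1 ∪ confMap (k - S.card) p.2) :=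
    fun p => by rw [confMap_packEquiv]
  rw [preimage_packEquiv_Wset]
  calc ∫⁻ p in Tset t S.card ×ˢ Uset t (k - S.card),
        g (confMap k (packEquiv (epsS S) p)) ∂volume
      = ∫⁻ p in Tset t S.card ×ˢ Uset t (k - S.card),
        g (confMap S.card p.1 ∪ confMap (k - S.card) p.2) ∂volume := by
        exact lintegral_congr fun p => by rw [h1]
    _ = Dint g t S.card (k - S.card) := by
        rw [MeasureTheory.Measure.volume_eq_prod, ← Measure.prod_restrict,
          lintegral_prod (fun p => g (confMap S.card p.1 ∪ confMap (k - S.card) p.2))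
            ((hg.comp (measurable_conf_union _ _)).aemeasurable)]
        rfl

/-- Decomposition of the integral over the orthant according to which coordinates lie below `t`. -/
theorem key_count (g : Finset ℝ → ℝ≥0∞) (hg : Measurable g) (ht : 0 < t) (k : ℕ) :
    ∫⁻ z in Ort k, g (confMap k z) ∂volume
      = ∑ j ∈ Finset.range (k + 1), (k.choose j : ℝ≥0∞) * Dint g t j (k - j) := by
  rw [Ort_eq_iUnion_Wset ht,
    Measure.restrict_iUnion pairwise_disjoint_Wset (fun S => measurableSet_Wset S),
    lintegral_sum_measure, tsum_fintype]
  have h1 : ∀ S : Finset (Fin k),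
      ∫⁻ z in Wset t S, g (confMap k z) ∂volume = Dint g t S.card (k - S.card) :=
    lintegral_Wset g hg
  calc ∑ S : Finset (Fin k), ∫⁻ z in Wset t S, g (confMap k z) ∂volume
      = ∑ S : Finset (Fin k), Dint g t S.card (k - S.card) := by
        exact Finset.sum_congr rfl fun S _ => h1 S
    _ = ∑ S ∈ (Finset.univ : Finset (Fin k)).powerset, Dint g t S.card (k - S.card) := by
        rw [Finset.powerset_univ]
    _ = ∑ j ∈ Finset.range (k + 1),
          ∑ S ∈ Finset.powersetCard j (Finset.univ : Finset (Fin k)),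
            Dint g t S.card (k - S.card) := by
        rw [Finset.sum_powerset]
        simp
    _ = ∑ j ∈ Finset.range (k + 1), (k.choose j : ℝ≥0∞) * Dint g t j (k - j) := by
        refine Finset.sum_congr rfl fun j _ => ?_
        rw [Finset.sum_congr rfl (fun S hS => by
          rw [(Finset.mem_powersetCard.1 hS).2]), Finset.sum_const,
          Finset.card_powersetCard, Finset.card_univ, Fintype.card_fin, nsmul_eq_mul]

lemma translate_lintegral (n : ℕ) (t : ℝ) {H : (Fin n → ℝ) → ℝ≥0∞} :
    ∫⁻ x in Ort n, H (fun i => x i + t) ∂volume = ∫⁻ x in Uset t n, H x ∂volume := by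
  have mp := measurePreserving_add_right (volume : Measure (Fin n → ℝ)) (fun _ => t)
  have h := mp.setLIntegral_comp_preimage_emb
    (MeasurableEquiv.addRight (fun _ : Fin n => t)).measurableEmbedding H (Uset t n)
  have hpre : (fun x : Fin n → ℝ => x + fun _ => t) ⁻¹' Uset t n = Ort n := by
    ext x
    simp only [Set.mem_preimage, Uset, Ort, Set.mem_setOf_eq, Pi.add_apply]
    exact forall_congr' fun i => by constructor <;> intro h <;> linarith
  rw [hpre] at h
  convert h using 1
  rfl

lemma tsum_antidiagonal_eq (a : ℕ × ℕ → ℝ≥0∞) :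
    ∑' k : ℕ, ∑ mn ∈ Finset.HasAntidiagonal.antidiagonal k, a mn = ∑' p : ℕ × ℕ, a p := by
  rw [← Finset.HasAntidiagonal.sigmaAntidiagonalEquivProd.tsum_eq a, ENNReal.tsum_sigma']
  refine tsum_congr fun k => ?_
  rw [← Finset.tsum_subtype (Finset.HasAntidiagonal.antidiagonal k) a]
  exact tsum_congr fun b => rfl

lemma fact_inv_choose (k j : ℕ) (h : j ≤ k) :
    ((k.factorial : ℝ≥0∞))⁻¹ * (k.choose j : ℝ≥0∞)
      = ((j.factorial : ℝ≥0∞))⁻¹ * (((k - j).factorial : ℝ≥0∞))⁻¹ := by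
  have hn : (k.choose j * j.factorial * (k - j).factorial : ℕ) = k.factorial :=
    Nat.choose_mul_factorial_mul_factorial h
  have hk : ((k.factorial : ℝ≥0∞)) ≠ 0 := by exact_mod_cast k.factorial_pos.ne'
  have hj : ((j.factorial : ℝ≥0∞)) ≠ 0 := by exact_mod_cast j.factorial_pos.ne'
  have hkj : (((k - j).factorial : ℝ≥0∞)) ≠ 0 := by exact_mod_cast (k - j).factorial_pos.ne'
  have hcast : (k.factorial : ℝ≥0∞)
      = (k.choose j : ℝ≥0∞) * (j.factorial : ℝ≥0∞) * ((k - j).factorial : ℝ≥0∞) := by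
    exact_mod_cast congrArg (fun z : ℕ => (z : ℝ≥0∞)) hn.symm
  refine (ENNReal.mul_right_inj hk (ENNReal.natCast_ne_top _)).1 ?_
  have e0 : (k.factorial : ℝ≥0∞) * (k.factorial : ℝ≥0∞)⁻¹ = 1 :=
    ENNReal.mul_inv_cancel hk (ENNReal.natCast_ne_top _)
  have e1 : (j.factorial : ℝ≥0∞) * (j.factorial : ℝ≥0∞)⁻¹ = 1 :=
    ENNReal.mul_inv_cancel hj (ENNReal.natCast_ne_top _)
  have e2 : ((k - j).factorial : ℝ≥0∞) * ((k - j).factorial : ℝ≥0∞)⁻¹ = 1 :=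
    ENNReal.mul_inv_cancel hkj (ENNReal.natCast_ne_top _)
  calc (k.factorial : ℝ≥0∞) * ((k.factorial : ℝ≥0∞)⁻¹ * (k.choose j : ℝ≥0∞))
      = ((k.factorial : ℝ≥0∞) * (k.factorial : ℝ≥0∞)⁻¹) * (k.choose j : ℝ≥0∞) := by ring
    _ = (k.choose j : ℝ≥0∞) := by rw [e0, one_mul]
    _ = (k.choose j : ℝ≥0∞) * (((j.factorial : ℝ≥0∞) * (j.factorial : ℝ≥0∞)⁻¹)
          * (((k - j).factorial : ℝ≥0∞) * ((k - j).factorial : ℝ≥0∞)⁻¹)) := by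
        rw [e1, e2, one_mul, mul_one]
    _ = (k.factorial : ℝ≥0∞) * ((j.factorial : ℝ≥0∞)⁻¹ * ((k - j).factorial : ℝ≥0∞)⁻¹) := by
        rw [hcast]; ring

def Aconf (t : ℝ) : Set (Finset ℝ) := {ξ : Finset ℝ | (ξ : Set ℝ) ⊆ Set.Ico 0 t}

lemma conf_preimage_Aconf (t : ℝ) (m : ℕ) : confMap m ⁻¹' Aconf t = Tset t m := by
  ext y
  simp only [Set.mem_preimage, Aconf, Set.mem_setOf_eq, Tset, confMap]
  rw [Finset.coe_image, Finset.coe_univ, Set.image_univ, Set.range_subset_iff]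

lemma measurableSet_Aconf (t : ℝ) : MeasurableSet (Aconf t) :=
  measurableSet_conf fun m => by rw [conf_preimage_Aconf]; exact measurableSet_Tset t m

lemma conf_preimage_Aconf_inter (t : ℝ) (m : ℕ) :
    confMap m ⁻¹' Aconf t ∩ Ort m = Tset t m := by
  rw [conf_preimage_Aconf]
  refine Set.inter_eq_left.2 fun y hy i => (hy i).1

lemma conf_shift (n : ℕ) (x : Fin n → ℝ) (t : ℝ) :
    (confMap n x).image (fun a => a + t) = confMap n (fun i => x i + t) := by
  simp [confMap, Finset.image_image]; rfl

lemma inner_expand (g : Finset ℝ → ℝ≥0∞) (hg : Measurable g) (t : ℝ) (γ : Finset ℝ) :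
    ∫⁻ ξ in Aconf t, g (γ.image (fun a => a + t) ∪ ξ) ∂lebesguePoisson
      = ∑' m, ((m.factorial : ℝ≥0∞))⁻¹ *
          ∫⁻ y in Tset t m, g (γ.image (fun a => a + t) ∪ confMap m y) ∂volume := by
  rw [lintegral_LP_restrict (F := fun ξ => g (γ.image (fun a => a + t) ∪ ξ))
    (measurable_from_conf fun m => hg.comp (measurable_const_union _ m))
    (measurableSet_Aconf t)]
  exact tsum_congr fun m => by rw [conf_preimage_Aconf_inter]

lemma measurable_joint (g : Finset ℝ → ℝ≥0∞) (hg : Measurable g) (t : ℝ) (n m : ℕ) :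
    Measurable (fun p : (Fin n → ℝ) × (Fin m → ℝ) =>
      g (confMap n (fun i => p.1 i + t) ∪ confMap m p.2)) :=
  hg.comp ((measurable_conf_union n m).comp
    (Measurable.prodMk
      (measurable_pi_lambda
        (fun (p : (Fin n → ℝ) × (Fin m → ℝ)) (i : Fin n) => p.1 i + t)
        (fun i => ((measurable_pi_apply i).comp measurable_fst).add measurable_const))
      measurable_snd))

lemma measurable_inner (g : Finset ℝ → ℝ≥0∞) (hg : Measurable g) (t : ℝ) :
    Measurable (fun γ : Finset ℝ => ∫⁻ ξ in Aconf t,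
      g (γ.image (fun a => a + t) ∪ ξ) ∂lebesguePoisson) := by
  apply measurable_from_conf
  intro n
  have h : (fun x : Fin n → ℝ => ∫⁻ ξ in Aconf t,
        g ((confMap n x).image (fun a => a + t) ∪ ξ) ∂lebesguePoisson)
      = fun x => ∑' m, ((m.factorial : ℝ≥0∞))⁻¹ *
          ∫⁻ y in Tset t m, g (confMap n (fun i => x i + t) ∪ confMap m y) ∂volume := by
    funext x
    rw [inner_expand g hg t]
    exact tsum_congr fun m => by rw [conf_shift]
  rw [h]
  exact Measurable.ennreal_tsum fun m => measurable_const.mul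
    (Measurable.lintegral_prod_right' (measurable_joint g hg t n m))

theorem master (g : Finset ℝ → ℝ≥0∞) (hg : Measurable g) {t : ℝ} (ht : 0 < t) :
    ∫⁻ γ, (∫⁻ ξ in Aconf t, g (γ.image (fun a => a + t) ∪ ξ) ∂lebesguePoisson)
        ∂lebesguePoisson
      = ∫⁻ γ, g γ ∂lebesguePoisson := by
  have hlhs : ∫⁻ γ, (∫⁻ ξ in Aconf t, g (γ.image (fun a => a + t) ∪ ξ) ∂lebesguePoisson)
        ∂lebesguePoisson
      = ∑' n, ∑' m, ((n.factorial : ℝ≥0∞))⁻¹ * (((m.factorial : ℝ≥0∞))⁻¹ *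
          Dint g t m n) := by
    rw [lintegral_LP (measurable_inner g hg t)]
    refine tsum_congr fun n => ?_
    have h1 : ∫⁻ x in Ort n, (∫⁻ ξ in Aconf t,
          g ((confMap n x).image (fun a => a + t) ∪ ξ) ∂lebesguePoisson) ∂volume
        = ∫⁻ x in Ort n, ∑' m, ((m.factorial : ℝ≥0∞))⁻¹ *
            ∫⁻ y in Tset t m, g (confMap n (fun i => x i + t) ∪ confMap m y) ∂volume
              ∂volume := by
      refine lintegral_congr fun x => ?_
      rw [inner_expand g hg t]
      exact tsum_congr fun m => by rw [conf_shift]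
    have hOrt : ∫⁻ x in Ort n, (∫⁻ ξ in Aconf t,
          g ((confMap n x).image (fun a => a + t) ∪ ξ) ∂lebesguePoisson) ∂volume
        = ∑' m, ((m.factorial : ℝ≥0∞))⁻¹ * Dint g t m n := by
      rw [h1, lintegral_tsum fun m => ((Measurable.lintegral_prod_right'
        (measurable_joint g hg t n m)).const_mul _).aemeasurable]
      refine tsum_congr fun m => ?_
      rw [lintegral_const_mul _ (Measurable.lintegral_prod_right' (measurable_joint g hg t n m))]
      refine congrArg _ ?_
      have h2 : ∫⁻ x in Ort n, (∫⁻ y in Tset t m,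
          g (confMap n (fun i => x i + t) ∪ confMap m y) ∂volume) ∂volume
        = ∫⁻ x in Uset t n, (∫⁻ y in Tset t m,
          g (confMap n x ∪ confMap m y) ∂volume) ∂volume :=
      translate_lintegral n t
        (H := fun x => ∫⁻ y in Tset t m, g (confMap n x ∪ confMap m y) ∂volume)
      rw [h2]
      rw [lintegral_lintegral_swap
        (f := fun x y => g (confMap n x ∪ confMap m y))
        (by exact (hg.comp (measurable_conf_union n m)).aemeasurable)]
      refine lintegral_congr fun y => lintegral_congr fun x => ?_
      rw [Finset.union_comm]
    rw [hOrt, ← ENNReal.tsum_mul_left]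
  have hrhs : ∫⁻ γ, g γ ∂lebesguePoisson
      = ∑' m, ∑' n, ((m.factorial : ℝ≥0∞))⁻¹ * (((n.factorial : ℝ≥0∞))⁻¹ *
          Dint g t m n) := by
    rw [lintegral_LP hg]
    have h1 : ∀ k : ℕ, ((k.factorial : ℝ≥0∞))⁻¹ * ∫⁻ x in Ort k, g (confMap k x) ∂volume
        = ∑ mn ∈ Finset.HasAntidiagonal.antidiagonal k,
            ((mn.1.factorial : ℝ≥0∞))⁻¹ * (((mn.2.factorial : ℝ≥0∞))⁻¹ *
              Dint g t mn.1 mn.2) := by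
      intro k
      rw [key_count g hg ht k, Finset.mul_sum,
        Finset.Nat.sum_antidiagonal_eq_sum_range_succ_mk
          (fun mn => ((mn.1.factorial : ℝ≥0∞))⁻¹ * (((mn.2.factorial : ℝ≥0∞))⁻¹ *
            Dint g t mn.1 mn.2)) k]
      refine Finset.sum_congr rfl fun j hj => ?_
      have hjk : j ≤ k := Nat.lt_succ_iff.1 (Finset.mem_range.1 hj)
      rw [← mul_assoc, ← mul_assoc, ← fact_inv_choose k j hjk]
    rw [tsum_congr h1, tsum_antidiagonal_eq, ENNReal.tsum_prod']
  rw [hlhs, hrhs, ENNReal.tsum_comm]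
  refine tsum_congr fun m => tsum_congr fun n => ?_
  ring


lemma measurable_union_left (c : Finset ℝ) : Measurable (fun ξ : Finset ℝ => c ∪ ξ) :=
  measurable_from_conf fun m => measurable_const_union c m

end SolubleAux

open SolubleAux in

/-- The soluble-model evolution preserves the L¹(λ)-norm of nonnegative functions:
    ∫ f_t dλ = ∫ f dλ. -/
theorem stmt_18 (f : Finset ℝ → ℝ) (hf_nonneg : ∀ γ, 0 ≤ f γ)
    (hf_int : Integrable f lebesguePoisson) (t : ℝ) (ht : 0 < t) :
    ∫ γ, solEvolution f t γ ∂lebesguePoisson = ∫ γ, f γ ∂lebesguePoisson := by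
  set f' : Finset ℝ → ℝ := hf_int.1.mk f with hf'def
  have hm' : Measurable f' := hf_int.1.stronglyMeasurable_mk.measurable
  have hae : f =ᵐ[lebesguePoisson] f' := hf_int.1.ae_eq_mk
  set g : Finset ℝ → ℝ≥0∞ := fun γ => ENNReal.ofReal (f' γ) with hgdef
  have hg : Measurable g := ENNReal.measurable_ofReal.comp hm'
  -- the exceptional null set
  have hN : lebesguePoisson {γ | f γ ≠ f' γ} = 0 := hae
  obtain ⟨N', hNN', hN'meas, hN'0⟩ :=
    exists_measurable_superset_of_null hN
  set gN : Finset ℝ → ℝ≥0∞ := N'.indicator (1 : Finset ℝ → ℝ≥0∞) with hgNdef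
  have hgNmeas : Measurable gN := measurable_one.indicator hN'meas
  have hgN0 : ∫⁻ γ, gN γ ∂lebesguePoisson = 0 := by
    rw [hgNdef, lintegral_indicator_one hN'meas]; exact hN'0
  have H0 : ∫⁻ γ, (∫⁻ ξ in Aconf t, gN (γ.image (fun a => a + t) ∪ ξ) ∂lebesguePoisson)
      ∂lebesguePoisson = 0 := by
    rw [master gN hgNmeas ht]; exact hgN0
  have hae2 : ∀ᵐ γ ∂lebesguePoisson, ∀ᵐ ξ ∂(lebesguePoisson.restrict (Aconf t)),
      f (γ.image (fun a => a + t) ∪ ξ) = f' (γ.image (fun a => a + t) ∪ ξ) := by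
    have h1 : ∀ᵐ γ ∂lebesguePoisson,
        ∫⁻ ξ in Aconf t, gN (γ.image (fun a => a + t) ∪ ξ) ∂lebesguePoisson = 0 :=
      (lintegral_eq_zero_iff (measurable_inner gN hgNmeas t)).1 H0
    filter_upwards [h1] with γ hγ
    have h2 : ∀ᵐ ξ ∂(lebesguePoisson.restrict (Aconf t)),
        gN (γ.image (fun a => a + t) ∪ ξ) = 0 :=
      (lintegral_eq_zero_iff (hgNmeas.comp (measurable_union_left _))).1 hγ
    filter_upwards [h2] with ξ hξ
    have hnot : (γ.image (fun a => a + t) ∪ ξ) ∉ N' := by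
      intro hmem
      rw [hgNdef, Set.indicator_of_mem hmem] at hξ
      simp at hξ
    by_contra hne
    exact hnot (hNN' hne)
  -- finiteness
  have hfin : ∫⁻ γ, g γ ∂lebesguePoisson < ⊤ := by
    have h1 : ∫⁻ γ, g γ ∂lebesguePoisson = ∫⁻ γ, ENNReal.ofReal (f γ) ∂lebesguePoisson :=
      lintegral_congr_ae (hae.mono fun γ hγ => by rw [hgdef]; simp [hγ])
    have h2 : ∀ γ, ENNReal.ofReal (f γ) = (‖f γ‖₊ : ℝ≥0∞) := fun γ => by
      rw [← enorm_eq_nnnorm, ← ofReal_norm, Real.norm_of_nonneg (hf_nonneg γ)]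
    rw [h1]
    simp_rw [h2]
    exact hf_int.2
  set E : Finset ℝ → ℝ≥0∞ := fun γ =>
    ∫⁻ ξ in Aconf t, g (γ.image (fun a => a + t) ∪ ξ) ∂lebesguePoisson with hEdef
  have hEmeas : Measurable E := measurable_inner g hg t
  have hEint : ∫⁻ γ, E γ ∂lebesguePoisson = ∫⁻ γ, g γ ∂lebesguePoisson := master g hg ht
  have hEfin : ∀ᵐ γ ∂lebesguePoisson, E γ < ⊤ :=
    ae_lt_top hEmeas (by rw [hEint]; exact hfin.ne)
  have hkey : ∀ᵐ γ ∂lebesguePoisson, solEvolution f t γ = (E γ).toReal := by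
    filter_upwards [hae2] with γ h1
    have hsm : AEStronglyMeasurable (fun ξ => f (γ.image (fun a => a + t) ∪ ξ))
        (lebesguePoisson.restrict (Aconf t)) :=
      ⟨fun ξ => f' (γ.image (fun a => a + t) ∪ ξ),
        ((hm'.comp (measurable_union_left _)).stronglyMeasurable), h1⟩
    have : solEvolution f t γ
        = (∫⁻ ξ in Aconf t, ENNReal.ofReal (f (γ.image (fun a => a + t) ∪ ξ))
            ∂lebesguePoisson).toReal := by
      rw [solEvolution]
      exact integral_eq_lintegral_of_nonneg_ae
        (Filter.Eventually.of_forall fun ξ => hf_nonneg _) hsm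
    rw [this]
    congr 1
    exact lintegral_congr_ae (h1.mono fun ξ hξ => by simp only [hgdef]; rw [hξ])
  calc ∫ γ, solEvolution f t γ ∂lebesguePoisson
      = ∫ γ, (E γ).toReal ∂lebesguePoisson := integral_congr_ae hkey
    _ = (∫⁻ γ, E γ ∂lebesguePoisson).toReal :=
        integral_toReal hEmeas.aemeasurable hEfin
    _ = (∫⁻ γ, g γ ∂lebesguePoisson).toReal := by rw [hEint]
    _ = (∫⁻ γ, ENNReal.ofReal (f γ) ∂lebesguePoisson).toReal := by
        congr 1
        exact lintegral_congr_ae (hae.mono fun γ hγ => by rw [hgdef]; simp [hγ])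
    _ = ∫ γ, f γ ∂lebesguePoisson := by
        rw [integral_eq_lintegral_of_nonneg_ae
          (Filter.Eventually.of_forall fun γ => hf_nonneg γ) hf_int.1]


end
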